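/- arXiv:1210.5724 — 3 statements merged into one kernel-verified Lean document; each statement's English description precedes it below -/
import Mathlib

section
/- A k-spread of F_q^n (a set of k-dimensional subspaces such that every nonzero vector lies in exactly one of them) exists if and only if k divides n. -/
open Polynomial

theorem aux_dvd (q k n : ℕ) (hq : 2 ≤ q) (hk : 1 ≤ k) (h : q ^ k - 1 ∣ q ^ n - 1) : k ∣ n := by
  have hr : n % k < k := Nat.mod_lt n hk
  have hmod := Nat.div_add_mod n k
  set d := n / k with hd
  set r := n % k with hrdef
  have h1 : (q : ℤ) ^ k - 1 ∣ (q : ℤ) ^ (k * d) - 1 := by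
    have := sub_dvd_pow_sub_pow ((q : ℤ) ^ k) 1 d
    simpa [← pow_mul] using this
  have h2 : (q : ℤ) ^ k - 1 ∣ (q : ℤ) ^ n - 1 := by
    have := Int.natCast_dvd_natCast.2 h
    have e1 : ((q ^ k - 1 : ℕ) : ℤ) = (q : ℤ) ^ k - 1 := by
      rw [Nat.cast_sub (Nat.one_le_pow _ _ (by omega))]; push_cast; ring
    have e2 : ((q ^ n - 1 : ℕ) : ℤ) = (q : ℤ) ^ n - 1 := by
      rw [Nat.cast_sub (Nat.one_le_pow _ _ (by omega))]; push_cast; ring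
    rwa [e1, e2] at this
  rw [← hmod] at h2
  have h3 : (q : ℤ) ^ k - 1 ∣ (q : ℤ) ^ r - 1 := by
    have key : (q : ℤ) ^ r - 1 = ((q:ℤ) ^ (k * d + r) - 1) - (q:ℤ) ^ r * ((q:ℤ) ^ (k * d) - 1) := by
      rw [pow_add]; ring
    rw [key]
    exact dvd_sub h2 (Dvd.dvd.mul_left h1 _)
  have hr0 : r = 0 := by
    by_contra hr0
    have hlt : (q : ℤ) ^ r < (q : ℤ) ^ k :=
      pow_lt_pow_right₀ (by exact_mod_cast hq) hr
    have hpos : (1:ℤ) < (q:ℤ) ^ r := one_lt_pow₀ (by exact_mod_cast hq) hr0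
    have := Int.le_of_dvd (by omega) h3
    omega
  exact ⟨d, by omega⟩

open Polynomial

theorem aux_finrank (F : Type*) [Field F] [Fintype F] (k : ℕ) (hk : 1 ≤ k) :
    Module.finrank F
      ((X ^ (Fintype.card F) ^ k - X : F[X]).SplittingField) = k := by
  set q := Fintype.card F with hq
  set g : F[X] := X ^ q ^ k - X with hg
  set E := g.SplittingField with hE
  set p := ringChar F with hp
  haveI hpf : Fact p.Prime := ⟨CharP.char_is_prime F p⟩
  obtain ⟨m, hm⟩ := FiniteField.card F p
  haveI : CharP E p := charP_of_injective_algebraMap (algebraMap F E).injective p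
  haveI : ExpChar E p := ExpChar.prime hpf.out
  have hq2 : 2 ≤ q := Fintype.one_lt_card
  have hqk : q ^ k = p ^ (m * k) := by rw [hq, hm.2, ← pow_mul]
  have hqk1 : 1 < q ^ k := Nat.one_lt_pow (by omega) hq2
  -- the Frobenius-power algebra endomorphism
  have hcomm : ∀ a : F, (iterateFrobenius E p (m * k)) (algebraMap F E a) = algebraMap F E a := by
    intro a
    rw [iterateFrobenius_def, ← map_pow, ← hqk, FiniteField.pow_card_pow]
  let φ : E →ₐ[F] E := { iterateFrobenius E p (m * k) with commutes' := hcomm }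
  have hsep : g.Separable := by
    have : p ∣ q ^ k := hqk ▸ dvd_pow_self p (by positivity)
    exact galois_poly_separable p (q ^ k) this
  have hroot : ∀ x ∈ g.rootSet E, φ x = x := by
    intro x hx
    rw [mem_rootSet] at hx
    have := hx.2
    simp only [hg, map_sub, map_pow, aeval_X, sub_eq_zero] at this
    show (iterateFrobenius E p (m * k)) x = x
    rw [iterateFrobenius_def, ← hqk, this]
  have htop : ∀ x : E, x ^ q ^ k = x := by
    have hadj : Algebra.adjoin F (g.rootSet E) = ⊤ := SplittingField.adjoin_rootSet g
    have hle : Algebra.adjoin F (g.rootSet E) ≤ AlgHom.equalizer φ (AlgHom.id F E) :=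
      Algebra.adjoin_le fun x hx => hroot x hx
    rw [hadj, top_le_iff] at hle
    intro x
    have : φ x = x := by
      have : x ∈ AlgHom.equalizer φ (AlgHom.id F E) := hle ▸ Algebra.mem_top
      simpa [AlgHom.mem_equalizer] using this
    rw [show φ x = (iterateFrobenius E p (m * k)) x from rfl, iterateFrobenius_def, ← hqk] at this
    exact this
  have hg0 : g ≠ 0 := FiniteField.X_pow_card_sub_X_ne_zero F hqk1
  have huniv : g.rootSet E = Set.univ := by
    ext x
    simp only [Set.mem_univ, iff_true]
    rw [mem_rootSet_of_ne hg0]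
    simp [hg, sub_eq_zero, htop x]
  haveI : Fintype E := Fintype.ofFinite E
  have hcard : Nat.card (g.rootSet E) = q ^ k := by
    rw [Nat.card_eq_fintype_card,
      card_rootSet_eq_natDegree hsep (SplittingField.splits g),
      FiniteField.X_pow_card_sub_X_natDegree_eq F hqk1]
  have hcardE : Fintype.card E = q ^ k := by
    rw [← Nat.card_eq_fintype_card, ← Nat.card_congr (Equiv.Set.univ E), ← huniv, hcard]
  have := Module.card_eq_pow_finrank (K := F) (V := E)
  rw [hcardE, ← hq] at this
  exact (Nat.pow_right_injective hq2 this).symm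


/-- A `k`-spread of `F_q^n` (a set of `k`-dimensional subspaces such that every
nonzero vector lies in exactly one of them) exists if and only if `k` divides `n`. -/
theorem k_spread_exists_iff_dvd
    (F : Type*) [Field F] [Fintype F] (n k : ℕ) (hk : 1 ≤ k) (hkn : k ≤ n) :
    (∃ S : Set (Submodule F (Fin n → F)),
        (∀ W ∈ S, Module.finrank F W = k) ∧
        ∀ v : Fin n → F, v ≠ 0 → ∃! W, W ∈ S ∧ v ∈ W) ↔ k ∣ n := by
  classical
  set q := Fintype.card F with hq
  have hq2 : 2 ≤ q := Fintype.one_lt_card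
  constructor
  · rintro ⟨S, hdim, huniq⟩
    haveI : Finite (Submodule F (Fin n → F)) :=
      Finite.of_injective (fun W => (W : Set (Fin n → F))) SetLike.coe_injective
    haveI : Fintype (Submodule F (Fin n → F)) := Fintype.ofFinite _
    let S' : Finset (Submodule F (Fin n → F)) := (Set.toFinite S).toFinset
    let f : Submodule F (Fin n → F) → Finset (Fin n → F) :=
      fun W => (Set.toFinite ((W : Set (Fin n → F)) \ {0})).toFinset
    have hmemf : ∀ (W) (v : Fin n → F), v ∈ f W ↔ v ∈ W ∧ v ≠ 0 := by
      intro W v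
      rw [Set.Finite.mem_toFinset]
      simp
    have hcover : (Finset.univ \ {0} : Finset (Fin n → F)) = S'.biUnion f := by
      ext v
      simp only [Finset.mem_sdiff, Finset.mem_univ, Finset.mem_singleton, true_and,
        Finset.mem_biUnion, S', Set.Finite.mem_toFinset]
      constructor
      · intro hv
        obtain ⟨W, ⟨hWS, hvW⟩, -⟩ := huniq v hv
        exact ⟨W, hWS, (hmemf W v).2 ⟨hvW, hv⟩⟩
      · rintro ⟨W, -, hvW⟩
        exact ((hmemf W v).1 hvW).2
    have hdisj : ∀ W ∈ S', ∀ W' ∈ S', W ≠ W' → Disjoint (f W) (f W') := by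
      intro W hW W' hW' hne
      rw [Finset.disjoint_left]
      intro v hv hv'
      rw [hmemf] at hv hv'
      rw [Set.Finite.mem_toFinset] at hW hW'
      obtain ⟨U, -, hU⟩ := huniq v hv.2
      exact hne ((hU W ⟨hW, hv.1⟩).trans (hU W' ⟨hW', hv'.1⟩).symm)
    have hcard1 : (Finset.univ \ {0} : Finset (Fin n → F)).card = q ^ n - 1 := by
      rw [Finset.card_sdiff_of_subset (by simp), Finset.card_singleton, Finset.card_univ]
      congr 1
      rw [Fintype.card_fun, Fintype.card_fin]
    have hcardW : ∀ W ∈ S', (f W).card = q ^ k - 1 := by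
      intro W hW
      rw [Set.Finite.mem_toFinset] at hW
      have h0W : (0 : Fin n → F) ∈ (W : Set (Fin n → F)) := W.zero_mem
      have : (f W).card = ((W : Set (Fin n → F)) \ {0}).ncard :=
        (Set.ncard_eq_toFinset_card _ _).symm
      rw [this, Set.ncard_diff_singleton_of_mem h0W]
      congr 1
      haveI : Fintype W := Fintype.ofFinite _
      have : (W : Set (Fin n → F)).ncard = Fintype.card W := by
        rw [← Nat.card_coe_set_eq]
        exact Nat.card_eq_fintype_card
      rw [this, Module.card_eq_pow_finrank (K := F), hdim W hW]
    have hsum : q ^ n - 1 = S'.card * (q ^ k - 1) := by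
      rw [← hcard1, hcover, Finset.card_biUnion hdisj, Finset.sum_congr rfl hcardW,
        Finset.sum_const, smul_eq_mul]
    exact aux_dvd q k n hq2 hk ⟨S'.card, by rw [hsum]; ring⟩
  · rintro ⟨d, hd⟩
    set E := (X ^ q ^ k - X : F[X]).SplittingField with hE
    have hfr : Module.finrank F E = k := aux_finrank F k hk
    haveI : Finite E := Module.finite_of_finite F
    have hVrank : Module.finrank F (Fin d → E) = n := by
      rw [Module.finrank_pi_fintype]
      simp [hfr, hd, mul_comm]
    have hFn : Module.finrank F (Fin n → F) = n := by
      rw [Module.finrank_pi, Fintype.card_fin]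
    obtain ⟨e⟩ := FiniteDimensional.nonempty_linearEquiv_of_finrank_eq
      (hFn.trans hVrank.symm)
    let f : (Fin d → E) → Submodule F (Fin n → F) := fun v =>
      Submodule.comap (e : (Fin n → F) →ₗ[F] (Fin d → E)) ((Submodule.span E {v}).restrictScalars F)
    have hmemf : ∀ (v : Fin d → E) (u : Fin n → F), u ∈ f v ↔ e u ∈ Submodule.span E {v} := by
      intro v u
      simp [f, Submodule.mem_comap]
    refine ⟨{W | ∃ v : Fin d → E, v ≠ 0 ∧ W = f v}, ?_, ?_⟩
    · rintro W ⟨v, hv, rfl⟩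
      have e1 : ↥(f v) ≃ₗ[F] ↥((Submodule.span E {v}).restrictScalars F) :=
        LinearEquiv.ofSubmodule' e _
      have e2 : ↥((Submodule.span E {v}).restrictScalars F) ≃ₗ[E] ↥(Submodule.span E {v}) :=
        Submodule.restrictScalarsEquiv F E (Fin d → E) _
      have e3 : ↥(Submodule.span E {v}) ≃ₗ[E] E :=
        (LinearEquiv.toSpanNonzeroSingleton E (Fin d → E) v hv).symm
      have := (e1.trans ((e2.trans e3).restrictScalars F)).finrank_eq
      rw [this, hfr]
    · intro u hu
      have heu : e u ≠ 0 := by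
        simpa using (LinearEquiv.map_ne_zero_iff e).2 hu
      refine ⟨f (e u), ⟨⟨e u, heu, rfl⟩, ?_⟩, ?_⟩
      · rw [hmemf]
        exact Submodule.mem_span_singleton_self _
      · rintro W ⟨⟨w, hw, rfl⟩, hvW⟩
        rw [hmemf] at hvW
        obtain ⟨c, hc⟩ := Submodule.mem_span_singleton.1 hvW
        have hc0 : c ≠ 0 := by
          rintro rfl
          rw [zero_smul] at hc
          exact heu hc.symm
        have hspan : Submodule.span E {w} = Submodule.span E {e u} := by
          rw [← hc, Submodule.span_singleton_smul_eq (IsUnit.mk0 c hc0) w]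
        simp only [f, hspan]
end

section
/- Let n be a positive integer with gcd(2^n - 1, 7) = 1, and let X be a 3-dimensional F_2-subspace of F_{2^13} (or more generally F_{2^n}), with α primitive. Then the cyclic shifts α^j·X for 0 ≤ j ≤ 2^n - 2 are pairwise distinct, giving 2^n - 1 distinct 3-dimensional subspaces. -/
/-!
If `α ^ j₁ • X = α ^ j₂ • X`, then `β = α ^ (-j₁) * α ^ j₂` maps `X` into itself and so permutes
its `2 ^ 3 - 1 = 7` nonzero vectors; comparing their product with the product of their images
gives `β ^ 7 = 1`. As also `β ^ (2 ^ n - 1) = 1` and `gcd (2 ^ n - 1, 7) = 1`, `β = 1`, and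
`j₁ = j₂` because both exponents are smaller than the order `2 ^ n - 1` of `α`.
-/

open Finset Module

theorem Finset.pow_card_erase_zero_eq_one_of_mul_mem {G₀ : Type*} [CommGroupWithZero G₀]
    [DecidableEq G₀] (S : Finset G₀) {β : G₀} (hβ : β ≠ 0) (h : ∀ x ∈ S, β * x ∈ S) :
    β ^ (S.erase 0).card = 1 := by
  set T := S.erase 0
  have hinj : Function.Injective (β * ·) := mul_right_injective₀ hβ
  have hT : T.image (β * ·) = T :=
    eq_of_subset_of_card_le
      (image_subset_iff.2 fun x hx =>
        mem_erase.2 ⟨mul_ne_zero hβ (ne_of_mem_erase hx), h x (mem_of_mem_erase hx)⟩)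
      (card_image_of_injective _ hinj).ge
  have hprod : β ^ T.card * ∏ x ∈ T, x = ∏ x ∈ T, x :=
    calc β ^ T.card * ∏ x ∈ T, x = ∏ x ∈ T, β * x := by rw [prod_mul_distrib, prod_const]
      _ = ∏ x ∈ T.image (β * ·), x := (prod_image (f := id) fun _ _ _ _ hxy => hinj hxy).symm
      _ = ∏ x ∈ T, x := by rw [hT]
  exact (mul_eq_right₀ (prod_ne_zero_iff.2 fun x hx => ne_of_mem_erase hx)).1 hprod

theorem Submodule.pow_eq_one_of_mul_mem {K F : Type*} [DivisionRing K] [Finite K] [Field F]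
    [Module K F] (X : Submodule K F) [Module.Finite K X] {β : F} (hβ : β ≠ 0)
    (h : ∀ x ∈ X, β * x ∈ X) : β ^ (Nat.card K ^ finrank K X - 1) = 1 := by
  classical
  have : Finite X := Module.finite_of_finite K
  have hX : (X : Set F).Finite := Set.toFinite _
  have hcard : (hX.toFinset.erase 0).card = Nat.card K ^ finrank K X - 1 := by
    rw [card_erase_of_mem (by simp), ← Set.ncard_eq_toFinset_card _ hX, ← Nat.card_coe_set_eq,
      ← Module.natCard_eq_pow_finrank]
    rfl
  rw [← hcard]
  exact hX.toFinset.pow_card_erase_zero_eq_one_of_mul_mem hβ (by simpa using h)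

theorem mul_mem_of_image_mul_eq {G₀ : Type*} [GroupWithZero G₀] {S : Set G₀} {a b : G₀}
    (ha : a ≠ 0) (h : (a * ·) '' S = (b * ·) '' S) {x : G₀} (hx : x ∈ S) : a⁻¹ * b * x ∈ S := by
  obtain ⟨y, hy, hxy⟩ : b * x ∈ (a * ·) '' S := h ▸ Set.mem_image_of_mem _ hx
  rwa [mul_assoc, ← hxy, inv_mul_cancel_left₀ ha]

theorem cyclic_shifts_of_three_dim_subspace_distinct_general
    (n : ℕ) (hn : 0 < n) (h7 : Nat.gcd (2 ^ n - 1) 7 = 1)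
    (F : Type*) [Field F]
    [Algebra (ZMod 2) F]
    (α : Fˣ) (hα : orderOf α = 2 ^ n - 1)
    (X : Submodule (ZMod 2) F) (hX : Module.finrank (ZMod 2) X = 3) :
    ∀ j₁ ≤ 2 ^ n - 2, ∀ j₂ ≤ 2 ^ n - 2,
      (fun x : F => (α : F) ^ j₁ * x) '' (X : Set F) =
        (fun x : F => (α : F) ^ j₂ * x) '' (X : Set F) → j₁ = j₂ := by
  intro j₁ hj₁ j₂ hj₂ hshift
  have : Module.Finite (ZMod 2) X := Module.finite_of_finrank_pos (by omega)
  set β : Fˣ := (α ^ j₁)⁻¹ * α ^ j₂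
  have hβX : ∀ x ∈ X, (β : F) * x ∈ X := fun x hx => by
    simpa [β] using mul_mem_of_image_mul_eq (pow_ne_zero j₁ α.ne_zero) hshift hx
  have hβ7 : β ^ 7 = 1 := Units.ext <| by
    simpa [hX] using X.pow_eq_one_of_mul_mem β.ne_zero hβX
  have hβα : β ^ (2 ^ n - 1) = 1 := by
    rw [mul_pow, inv_pow, pow_right_comm _ j₁, pow_right_comm _ j₂, ← hα, pow_orderOf_eq_one,
      one_pow, one_pow, inv_one, one_mul]
  have hβ1 : β = 1 := by simpa [h7] using pow_gcd_eq_one.2 ⟨hβα, hβ7⟩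
  have h2n : 2 ≤ 2 ^ n := Nat.le_self_pow hn.ne' 2
  exact pow_injOn_Iio_orderOf (by rw [Set.mem_Iio, hα]; omega) (by rw [Set.mem_Iio, hα]; omega)
    (inv_mul_eq_one.1 hβ1)

/-- If `gcd(2^n - 1, 7) = 1` and `X` is a 3-dimensional `F_2`-subspace of `F_{2^n}`
with `α` primitive, then the cyclic shifts `α^j·X`, `0 ≤ j ≤ 2^n - 2`, are pairwise
distinct, giving `2^n - 1` distinct 3-dimensional subspaces. -/
theorem cyclic_shifts_of_three_dim_subspace_distinct
    (n : ℕ) (hn : 0 < n) (h7 : Nat.gcd (2 ^ n - 1) 7 = 1)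
    (F : Type*) [Field F] [Fintype F] (hcard : Fintype.card F = 2 ^ n)
    [Algebra (ZMod 2) F]
    (α : Fˣ) (hα : orderOf α = 2 ^ n - 1)
    (X : Submodule (ZMod 2) F) (hX : Module.finrank (ZMod 2) X = 3) :
    ∀ j₁ ≤ 2 ^ n - 2, ∀ j₂ ≤ 2 ^ n - 2,
      (fun x : F => (α : F) ^ j₁ * x) '' (X : Set F) =
        (fun x : F => (α : F) ^ j₂ * x) '' (X : Set F) → j₁ = j₂ :=
  cyclic_shifts_of_three_dim_subspace_distinct_general n hn h7 F α hα X hX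
end

section
/- Let X = {0, α^{i_1}, ..., α^{i_7}} be a 3-dimensional F_2-subspace of F_{2^n} with difference set Δ(X) = { i_r - i_s mod (2^n - 1) : r ≠ s }. If |Δ(X)| = 42, then the 7·(2^n - 1) two-dimensional subspaces contained in the 2^n - 1 cyclic shifts α^j·X are pairwise distinct. -/
/-!
Since `Δ(X)` has the maximal size `7 · 6 = 42`, the map `(a, b) ↦ a / b` is injective on pairs
of distinct nonzero elements of `X`. If a plane `W` lies in `α^{j₁} X` and in `α^{j₂} X`, pick
distinct nonzero `x, y ∈ W` and write `x = α^{j₁} a = α^{j₂} c`, `y = α^{j₁} b = α^{j₂} d`.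
Then `a / b = x / y = c / d`, so `a = c` and `α^{j₁} = α^{j₂}`; as `j₁, j₂` are below the order
of `α`, `j₁ = j₂`.
-/

open Set Module

theorem Set.ncard_offDiag {α : Type*} {s : Set α} (hs : s.Finite) :
    s.offDiag.ncard = s.ncard * s.ncard - s.ncard := by
  classical
  rw [ncard_eq_toFinset_card _ hs.offDiag, ncard_eq_toFinset_card _ hs, hs.toFinset_offDiag,
    Finset.offDiag_card]

theorem Submodule.ncard_sdiff_zero {K V : Type*} [DivisionRing K] [AddCommGroup V] [Module K V]
    (X : Submodule K V) [Module.Finite K X] :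
    ((X : Set V) \ {0}).ncard = Nat.card K ^ finrank K X - 1 := by
  rw [ncard_sdiff_singleton_of_mem X.zero_mem, ← Nat.card_coe_set_eq, SetLike.coe_sort_coe,
    Module.natCard_eq_pow_finrank (K := K)]

theorem pow_injOn_Iic_orderOf_sub_one {G : Type*} [Monoid G] (x : G) :
    (Iic (orderOf x - 1)).InjOn (x ^ ·) := by
  intro i hi j hj hij
  simp only [mem_Iic] at hi hj
  rcases (orderOf x).eq_zero_or_pos with h | h
  · omega
  · exact pow_injOn_Iio_orderOf (show i < orderOf x by omega) (show j < orderOf x by omega) hij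

section Ratios

variable {G₀ : Type*} [CommGroupWithZero G₀]

/-- The paper's `Δ(X)`, written multiplicatively: the exponent difference `i_r - i_s` is the
ratio `α^{i_r} / α^{i_s}`. -/
def ratioSet (S : Set G₀) : Set G₀ :=
  {z | ∃ x ∈ S, ∃ y ∈ S, x ≠ 0 ∧ y ≠ 0 ∧ x ≠ y ∧ z = x / y}

theorem ratioSet_eq_image (S : Set G₀) :
    ratioSet S = (fun p : G₀ × G₀ => p.1 / p.2) '' (S \ {0}).offDiag := by
  ext z
  simp only [ratioSet, mem_ofPred_eq, mem_image, mem_offDiag, mem_sdiff, mem_singleton_iff,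
    Prod.exists]
  constructor
  · rintro ⟨x, hx, y, hy, hx0, hy0, hxy, rfl⟩
    exact ⟨x, y, ⟨⟨hx, hx0⟩, ⟨hy, hy0⟩, hxy⟩, rfl⟩
  · rintro ⟨x, y, ⟨⟨hx, hx0⟩, ⟨hy, hy0⟩, hxy⟩, rfl⟩
    exact ⟨x, hx, y, hy, hx0, hy0, hxy, rfl⟩

theorem injOn_div_of_ncard_ratioSet {S : Set G₀} {k : ℕ} (hk : (S \ {0}).ncard = k) (hk0 : k ≠ 0)
    (hS : (ratioSet S).ncard = k * (k - 1)) :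
    (S \ {0}).offDiag.InjOn (fun p : G₀ × G₀ => p.1 / p.2) := by
  have hfin : (S \ {0}).Finite := finite_of_ncard_ne_zero (hk ▸ hk0)
  refine injOn_of_ncard_image_eq ?_ hfin.offDiag
  rw [← ratioSet_eq_image, hS, ncard_offDiag hfin, hk, Nat.mul_sub_one]

theorem eq_of_mem_mul_image_of_injOn_div {S : Set G₀}
    (hS : (S \ {0}).offDiag.InjOn (fun p : G₀ × G₀ => p.1 / p.2)) {c₁ c₂ x y : G₀}
    (hx : x ≠ 0) (hy : y ≠ 0) (hxy : x ≠ y)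
    (hx₁ : x ∈ (c₁ * ·) '' S) (hy₁ : y ∈ (c₁ * ·) '' S)
    (hx₂ : x ∈ (c₂ * ·) '' S) (hy₂ : y ∈ (c₂ * ·) '' S) : c₁ = c₂ := by
  obtain ⟨a, ha, rfl : c₁ * a = x⟩ := hx₁
  obtain ⟨b, hb, rfl : c₁ * b = y⟩ := hy₁
  obtain ⟨c, hc, hca : c₂ * c = c₁ * a⟩ := hx₂
  obtain ⟨d, hd, hdb : c₂ * d = c₁ * b⟩ := hy₂
  have hab : a ≠ b := fun h => hxy (by rw [h])
  have hcd : c ≠ d := fun h => hxy (by rw [← hca, ← hdb, h])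
  have hc₁ : c₁ ≠ 0 := left_ne_zero_of_mul hx
  have hab_mem : (a, b) ∈ (S \ {0}).offDiag :=
    ⟨⟨ha, right_ne_zero_of_mul hx⟩, ⟨hb, right_ne_zero_of_mul hy⟩, hab⟩
  rw [← hca] at hx
  rw [← hdb] at hy
  have hc₂ : c₂ ≠ 0 := left_ne_zero_of_mul hx
  have hcd_mem : (c, d) ∈ (S \ {0}).offDiag :=
    ⟨⟨hc, right_ne_zero_of_mul hx⟩, ⟨hd, right_ne_zero_of_mul hy⟩, hcd⟩
  have hac : a = c := congrArg Prod.fst <| hS hab_mem hcd_mem <| by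
    show a / b = c / d
    rw [← mul_div_mul_left a b hc₁, ← mul_div_mul_left c d hc₂, hca, hdb]
  subst hac
  exact (mul_right_cancel₀ (right_ne_zero_of_mul hx) hca).symm

end Ratios

theorem complete_subspace_shifts_have_distinct_planes_general
    (n : ℕ)
    (F : Type*) [Field F]
    [Algebra (ZMod 2) F]
    (α : Fˣ) (hα : orderOf α = 2 ^ n - 1)
    (X : Submodule (ZMod 2) F) (hX : Module.finrank (ZMod 2) X = 3)
    (hΔ : { z : F | ∃ x ∈ X, ∃ y ∈ X, x ≠ 0 ∧ y ≠ 0 ∧ x ≠ y ∧ z = x / y }.ncard = 42) :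
    ∀ j₁ ≤ 2 ^ n - 2, ∀ j₂ ≤ 2 ^ n - 2,
      ∀ W : Submodule (ZMod 2) F, Module.finrank (ZMod 2) W = 2 →
        (W : Set F) ⊆ (fun x : F => (α : F) ^ j₁ * x) '' (X : Set F) →
        (W : Set F) ⊆ (fun x : F => (α : F) ^ j₂ * x) '' (X : Set F) →
        j₁ = j₂ := by
  intro j₁ hj₁ j₂ hj₂ W hW hW₁ hW₂
  have : Module.Finite (ZMod 2) X := Module.finite_of_finrank_eq_succ hX
  have : Module.Finite (ZMod 2) W := Module.finite_of_finrank_eq_succ hW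
  have hX7 : ((X : Set F) \ {0}).ncard = 7 := by
    rw [X.ncard_sdiff_zero, hX, Nat.card_zmod]; norm_num
  have hinj := injOn_div_of_ncard_ratioSet hX7 (by norm_num) hΔ
  have hW1 : 1 < ((W : Set F) \ {0}).ncard := by
    rw [W.ncard_sdiff_zero, hW, Nat.card_zmod]; norm_num
  obtain ⟨x, ⟨hxW, hx0⟩, y, ⟨hyW, hy0⟩, hxy⟩ :=
    (one_lt_ncard (finite_of_ncard_pos (zero_lt_one.trans hW1))).mp hW1
  have hpow : (α : F) ^ j₁ = (α : F) ^ j₂ :=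
    eq_of_mem_mul_image_of_injOn_div hinj hx0 hy0 hxy (hW₁ hxW) (hW₁ hyW) (hW₂ hxW) (hW₂ hyW)
  exact pow_injOn_Iic_orderOf_sub_one α (by simp only [mem_Iic]; omega)
    (by simp only [mem_Iic]; omega) (Units.ext (by push_cast; exact hpow))

/-- Let `X` be a 3-dimensional `F_2`-subspace of `F_{2^n}` whose difference set
`Δ(X) = { i_r - i_s mod (2^n - 1) : r ≠ s }` (equivalently, the set of ratios
`x/y` of distinct nonzero elements of `X`) has size 42. Then the `7·(2^n - 1)`
two-dimensional subspaces contained in the `2^n - 1` cyclic shifts `α^j·X` are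
pairwise distinct: no 2-dimensional subspace lies in two different shifts. -/
theorem complete_subspace_shifts_have_distinct_planes
    (n : ℕ) (hn : 0 < n)
    (F : Type*) [Field F] [Fintype F] (hcard : Fintype.card F = 2 ^ n)
    [Algebra (ZMod 2) F]
    (α : Fˣ) (hα : orderOf α = 2 ^ n - 1)
    (X : Submodule (ZMod 2) F) (hX : Module.finrank (ZMod 2) X = 3)
    (hΔ : { z : F | ∃ x ∈ X, ∃ y ∈ X, x ≠ 0 ∧ y ≠ 0 ∧ x ≠ y ∧ z = x / y }.ncard = 42) :
    ∀ j₁ ≤ 2 ^ n - 2, ∀ j₂ ≤ 2 ^ n - 2,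
      ∀ W : Submodule (ZMod 2) F, Module.finrank (ZMod 2) W = 2 →
        (W : Set F) ⊆ (fun x : F => (α : F) ^ j₁ * x) '' (X : Set F) →
        (W : Set F) ⊆ (fun x : F => (α : F) ^ j₂ * x) '' (X : Set F) →
        j₁ = j₂ :=
  complete_subspace_shifts_have_distinct_planes_general n F α hα X hX hΔ
end
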